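/- arXiv:0901.1678 — 3 statements merged into one kernel-verified Lean document; each statement's English description precedes it below -/
import Mathlib

section
/- For any integers n ≥ q ≥ 3, there exists a connected 3-hypergraph H of size n such that (I(H)^∨)^2 has an associated prime of height q. -/
open MvPolynomial Finset

noncomputable section

/-- A `k`-cover of a hypergraph with edge set `E`: a nonzero tuple whose entries
sum to at least `k` over every edge. -/
def IsCover {V : Type*} (E : Finset (Finset V)) (k : ℕ) (a : V → ℕ) : Prop :=
  a ≠ 0 ∧ ∀ e ∈ E, k ≤ ∑ i ∈ e, a i

/-- `a` is a sum of two 1-covers. -/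
def SumTwoOneCovers {V : Type*} (E : Finset (Finset V)) (a : V → ℕ) : Prop :=
  ∃ b c : V → ℕ, IsCover E 1 b ∧ IsCover E 1 c ∧ a = b + c

/-- An independent set: no edge is contained in `S`. -/
def IsIndep {V : Type*} (E : Finset (Finset V)) (S : Finset V) : Prop :=
  ∀ e ∈ E, ¬ e ⊆ S

/-- `i` is in the neighborhood of `S`: `i ∉ S` and some edge consists of `i`
together with vertices of `S`. -/
def InNbhd {V : Type*} (E : Finset (Finset V)) (S : Finset V) (i : V) : Prop :=
  i ∉ S ∧ ∃ e ∈ E, i ∈ e ∧ ∀ j ∈ e, j ≠ i → j ∈ S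

open Classical in
/-- The 2-cover `A_S` attached to an independent set `S`:
`0` on `S`, `2` on `N(S)`, and `1` elsewhere. -/
noncomputable def indepCover {V : Type*} (E : Finset (Finset V)) (S : Finset V) : V → ℕ :=
  fun i => if i ∈ S then 0 else if InNbhd E S i then 2 else 1

/-- The Alexander dual of the edge ideal: `⋂_{edges e} (x_i : i ∈ e)`. -/
noncomputable def dualIdeal {V : Type*} (K : Type*) [Field K] (E : Finset (Finset V)) :
    Ideal (MvPolynomial V K) :=
  ⨅ e ∈ E, Ideal.span (X '' (e : Set V))

/-- The monomial `x_1^{a_1} ⋯ x_n^{a_n}` attached to a tuple `a`. -/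
noncomputable def coverMonomial {V : Type*} [Fintype V] (K : Type*) [Field K] (a : V → ℕ) :
    MvPolynomial V K :=
  ∏ i, X i ^ a i

/-- Connectedness of a hypergraph: any two vertices are linked by a chain of
vertices in which consecutive vertices share an edge. -/
def HConnected {V : Type*} (E : Finset (Finset V)) : Prop :=
  ∀ x y : V, ∃ l : List V, l.head? = some x ∧ l.getLast? = some y ∧
    l.Chain' fun a b => ∃ e ∈ E, a ∈ e ∧ b ∈ e

/-- The cyclic 3-hypergraph with edges `{x_1,x_2,x_3}, {x_3,x_4,x_5}, …`
(0-based: `{2j, 2j+1, 2j+2}` modulo `n`). -/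
def cyc3 (n : ℕ) (hn : 0 < n) : Finset (Finset (Fin n)) :=
  (Finset.range ((n + 1) / 2)).image fun j =>
    ({⟨(2 * j) % n, Nat.mod_lt _ hn⟩, ⟨(2 * j + 1) % n, Nat.mod_lt _ hn⟩,
      ⟨(2 * j + 2) % n, Nat.mod_lt _ hn⟩} : Finset (Fin n))

/-- The alternating tuple: `1` on odd vertices `x_1, x_3, …` (0-based even
indices), `0` on even vertices. -/
def altCover (n : ℕ) : Fin n → ℕ :=
  fun i => if (i : ℕ) % 2 = 0 then 1 else 0

/-!
The hypergraph is a core on `S = {0, …, q-1}` plus a fan of edges `{0, v-1, v}` on the remaining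
vertices. The core is an odd cycle on a rim `{0, …, m-1}` whose 3-edges `{j, j+1, m}` and
`{0, m-1, q-1}` are completed by the one or two remaining vertices of `S` (a single triangle when
`q = 3`). Let `M` be the monomial with exponent `1` on the rim, `0` on the rest of `S` and `2`
off `S`. A monomial lies in `(I(H)^∨)^2` iff its exponent dominates a sum of two transversals of
`H`. If `r ∉ P_S = (x_i : i ∈ S)`, some monomial of `r` avoids `S`, so `r M ∈ (I(H)^∨)^2` would
give two transversals fitting under `M` on `S`, and these would properly 2-colour the odd rim.
Raising the exponent of any single vertex of `S` by one, however, makes room for two transversals,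
so `x_i M ∈ (I(H)^∨)^2` for `i ∈ S`. Hence `(I(H)^∨)^2 : M = P_S`, a prime of height `q`.
-/

namespace AlexanderDual

theorem isPrime_span_X_image {σ R : Type*} [CommRing R] [IsDomain R] (s : Set σ) :
    (Ideal.span (X '' s) : Ideal (MvPolynomial σ R)).IsPrime := by
  classical
  set P : Ideal (MvPolynomial σ R) := Ideal.span (X '' s)
  let φ : MvPolynomial σ R →ₐ[R] MvPolynomial σ R := aeval fun i => if i ∈ s then 0 else X i
  suffices P = RingHom.ker φ by rw [this]; exact RingHom.ker_isPrime _
  apply le_antisymm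
  · rw [Ideal.span_le]
    rintro _ ⟨i, hi, rfl⟩
    simp [φ, hi]
  · intro p hp
    have hφ : (Ideal.Quotient.mkₐ R P).comp φ = Ideal.Quotient.mkₐ R P := by
      refine MvPolynomial.algHom_ext fun i => ?_
      by_cases hi : i ∈ s
      · simpa [φ, hi, eq_comm (a := (0 : _ ⧸ P)), Ideal.Quotient.eq_zero_iff_mem] using
          (Ideal.subset_span ⟨i, hi, rfl⟩ : X i ∈ P)
      · simp [φ, hi]
    have := congrArg (· p) hφ
    simp only [AlgHom.comp_apply, Ideal.Quotient.mkₐ_eq_mk] at this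
    rwa [RingHom.mem_ker.1 hp, map_zero, eq_comm, Ideal.Quotient.eq_zero_iff_mem] at this

section Transversals

variable {V : Type*}

def IsTransversal (E : Finset (Finset V)) (b : V → ℕ) : Prop :=
  ∀ e ∈ E, ∃ v ∈ e, b v ≠ 0

theorem IsTransversal.mono {E F : Finset (Finset V)} {b : V → ℕ} (h : IsTransversal E b)
    (hFE : F ⊆ E) : IsTransversal F b :=
  fun e he => h e (hFE he)

variable {K : Type*} [Field K] {E : Finset (Finset V)}

theorem mem_dualIdeal_iff {p : MvPolynomial V K} :
    p ∈ dualIdeal K E ↔ ∀ d ∈ p.support, IsTransversal E d := by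
  simp only [dualIdeal, Ideal.mem_iInf, mem_ideal_span_X_image, IsTransversal]
  exact ⟨fun h d hd e he => h e he d hd, fun h e he d hd => h d hd e he⟩

theorem monomial_mem_dualIdeal {b : V →₀ ℕ} (hb : IsTransversal E b) :
    monomial b (1 : K) ∈ dualIdeal K E := by
  classical
  rw [mem_dualIdeal_iff]
  intro d hd
  rw [support_monomial, if_neg one_ne_zero] at hd
  rwa [mem_singleton.1 hd]

theorem dualIdeal_le_span_transversals :
    dualIdeal K E ≤ Ideal.span ((monomial · 1) '' {b : V →₀ ℕ | IsTransversal E b}) :=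
  fun _ hp => mem_ideal_span_monomial_image.2 fun d hd => ⟨d, mem_dualIdeal_iff.1 hp d hd, le_rfl⟩

theorem exists_transversals_le_of_mem_dualIdeal_sq {p : MvPolynomial V K}
    (hp : p ∈ dualIdeal K E ^ 2) {d : V →₀ ℕ} (hd : d ∈ p.support) :
    ∃ b c : V →₀ ℕ, IsTransversal E b ∧ IsTransversal E c ∧ b + c ≤ d := by
  have hle : dualIdeal K E ^ 2 ≤ Ideal.span ((monomial · (1 : K)) ''
      {a | ∃ b c : V →₀ ℕ, IsTransversal E b ∧ IsTransversal E c ∧ a = b + c}) := by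
    rw [sq]
    refine (Ideal.mul_mono dualIdeal_le_span_transversals dualIdeal_le_span_transversals).trans ?_
    rw [Ideal.span_mul_span']
    refine Ideal.span_mono ?_
    rintro _ ⟨_, ⟨b, hb, rfl⟩, _, ⟨c, hc, rfl⟩, rfl⟩
    exact ⟨b + c, ⟨b, c, hb, hc, rfl⟩, by simp [monomial_mul]⟩
  obtain ⟨_, ⟨b, c, hb, hc, rfl⟩, hle⟩ := mem_ideal_span_monomial_image.1 (hle hp) d hd
  exact ⟨b, c, hb, hc, hle⟩

def TwoTransversalsBelow (E : Finset (Finset V)) (S : Finset V) (w : V → ℕ) : Prop :=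
  ∃ b c : V → ℕ, IsTransversal E b ∧ IsTransversal E c ∧ ∀ v ∈ S, b v + c v ≤ w v

theorem TwoTransversalsBelow.mono {F : Finset (Finset V)} {S : Finset V} {w w' : V → ℕ}
    (h : TwoTransversalsBelow E S w) (hFE : F ⊆ E) (hw : ∀ v ∈ S, w v ≤ w' v) :
    TwoTransversalsBelow F S w' :=
  let ⟨b, c, hb, hc, hbc⟩ := h
  ⟨b, c, hb.mono hFE, hc.mono hFE, fun v hv => (hbc v hv).trans (hw v hv)⟩

theorem mem_span_X_of_mul_monomial_mem_dualIdeal_sq {S : Finset V} {W : V →₀ ℕ}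
    (hW : ¬ TwoTransversalsBelow E S W) {r : MvPolynomial V K}
    (hr : r * monomial W 1 ∈ dualIdeal K E ^ 2) : r ∈ Ideal.span (X '' (S : Set V)) := by
  by_contra hrS
  obtain ⟨d, hd, hdS⟩ : ∃ d ∈ r.support, ∀ v ∈ S, d v = 0 := by
    simpa [mem_ideal_span_X_image] using hrS
  have hdW : d + W ∈ (r * monomial W 1).support := by
    rwa [mem_support_iff, coeff_mul_monomial, mul_one, ← mem_support_iff]
  obtain ⟨b, c, hb, hc, hbc⟩ := exists_transversals_le_of_mem_dualIdeal_sq hr hdW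
  refine hW ⟨b, c, hb, hc, fun v hv => ?_⟩
  simpa [hdS v hv] using hbc v

end Transversals

section Criterion

variable {V K : Type*} [Field K] [Finite V] [DecidableEq V] {F G : Finset (Finset V)}
  {S : Finset V}

theorem X_mul_monomial_mem_dualIdeal_sq (hG : ∀ e ∈ G, ∃ v ∈ e, v ∉ S) {W : V →₀ ℕ}
    (hW : ∀ v ∉ S, 2 ≤ W v) {i : V} (h : TwoTransversalsBelow F S (⇑W + Pi.single i 1)) :
    X i * monomial W (1 : K) ∈ dualIdeal K (F ∪ G) ^ 2 := by
  obtain ⟨b, c, hb, hc, hbc⟩ := h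
  -- outside `S` there is room for one unit from each transversal, which covers `G`
  let extend (f : V → ℕ) : V →₀ ℕ :=
    Finsupp.equivFunOnFinite.symm fun v => if v ∈ S then f v else 1
  have hextend {f : V → ℕ} (hf : IsTransversal F f) : IsTransversal (F ∪ G) (extend f) := by
    intro e he
    rcases mem_union.1 he with he | he
    · obtain ⟨v, hv, hfv⟩ := hf e he
      exact ⟨v, hv, by by_cases hvS : v ∈ S <;> simp [extend, hvS, hfv]⟩
    · obtain ⟨v, hv, hvS⟩ := hG e he
      exact ⟨v, hv, by simp [extend, hvS]⟩
  have hle : extend b + extend c ≤ Finsupp.single i 1 + W := by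
    intro v
    by_cases hvS : v ∈ S
    · simpa [extend, hvS, Pi.single_apply, Finsupp.single_apply, eq_comm, add_comm]
        using hbc v hvS
    · simpa [extend, hvS] using le_add_left (hW v hvS)
  have hfactor : X i * monomial W (1 : K) =
      monomial (Finsupp.single i 1 + W - (extend b + extend c)) 1 *
        (monomial (extend b) 1 * monomial (extend c) 1) := by
    rw [X, monomial_mul, monomial_mul, monomial_mul, tsub_add_cancel_of_le hle, one_mul,
      one_mul]
  rw [hfactor, sq]
  exact Ideal.mul_mem_left _ _ (Ideal.mul_mem_mul (monomial_mem_dualIdeal (hextend hb))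
    (monomial_mem_dualIdeal (hextend hc)))

theorem isAssociatedPrime_span_X_dualIdeal_sq (hG : ∀ e ∈ G, ∃ v ∈ e, v ∉ S) {w : V → ℕ}
    (hw : ¬ TwoTransversalsBelow F S w)
    (hcrit : ∀ i ∈ S, TwoTransversalsBelow F S (w + Pi.single i 1)) :
    IsAssociatedPrime (Ideal.span (X '' (S : Set V)) : Ideal (MvPolynomial V K))
      (MvPolynomial V K ⧸ dualIdeal K (F ∪ G) ^ 2) := by
  set P : Ideal (MvPolynomial V K) := Ideal.span (X '' (S : Set V))
  set J := dualIdeal K (F ∪ G) ^ 2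
  let W : V →₀ ℕ := Finsupp.equivFunOnFinite.symm fun v => if v ∈ S then w v else 2
  have hWS (v : V) (hv : v ∈ S) : W v = w v := by simp [W, hv]
  have hP : P = Submodule.colon ⊥ {Ideal.Quotient.mk J (monomial W 1)} := by
    ext r
    rw [Submodule.mem_colon_singleton, Submodule.mem_bot, Algebra.smul_def,
      Ideal.Quotient.algebraMap_eq, ← map_mul, Ideal.Quotient.eq_zero_iff_mem]
    constructor
    · intro hr
      have hPJ : P ≤ J.colon (Ideal.span {monomial W (1 : K)}) := by
        rw [Ideal.span_le]
        rintro _ ⟨i, hi, rfl⟩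
        refine Submodule.mem_colon_span_singleton.2 (X_mul_monomial_mem_dualIdeal_sq hG
          (fun v hv => by simp [W, hv]) ((hcrit i hi).mono subset_rfl fun v hv => ?_))
        simp [hWS v hv]
      exact Submodule.mem_colon_span_singleton.1 (hPJ hr)
    · refine mem_span_X_of_mul_monomial_mem_dualIdeal_sq fun hbelow => hw ?_
      exact hbelow.mono subset_union_left fun v hv => (hWS v hv).le
  have hprime : P.IsPrime := isPrime_span_X_image _
  exact ⟨hprime, _, by rw [← hP, hprime.radical]⟩

end Criterion

section Connectivity

variable {V : Type*}

def HAdj (E : Finset (Finset V)) (x y : V) : Prop :=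
  ∃ e ∈ E, x ∈ e ∧ y ∈ e

theorem HAdj.symm {E : Finset (Finset V)} {x y : V} (h : HAdj E x y) : HAdj E y x :=
  let ⟨e, he, hx, hy⟩ := h
  ⟨e, he, hy, hx⟩

instance {E : Finset (Finset V)} : Std.Symm (HAdj E) :=
  ⟨fun _ _ => HAdj.symm⟩

theorem HAdj.mono {E F : Finset (Finset V)} {x y : V} (h : HAdj E x y) (hEF : E ⊆ F) :
    HAdj F x y :=
  let ⟨e, he, hx, hy⟩ := h
  ⟨e, hEF he, hx, hy⟩

theorem hConnected_of_reflTransGen {E : Finset (Finset V)} (r : V)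
    (h : ∀ x, Relation.ReflTransGen (HAdj E) x r) : HConnected E := by
  intro x y
  have hxy : Relation.ReflTransGen (HAdj E) x y :=
    (h x).trans (Std.Symm.symm _ _ (h y))
  obtain ⟨l, hl, hlast⟩ := List.exists_isChain_cons_of_relationReflTransGen hxy
  exact ⟨x :: l, rfl, by rw [List.getLast?_eq_getLast_of_ne_nil (List.cons_ne_nil _ _), hlast], hl⟩

end Connectivity

section OddCycle

theorem false_of_alternates_on_odd_cycle {p : ℕ → Prop} {m : ℕ} (hm : Odd m)
    (hstep : ∀ j < m - 1, (p (j + 1) ↔ ¬ p j)) (hclose : p (m - 1) ↔ ¬ p 0) : False := by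
  have hparity : ∀ j < m, (p j ↔ (p 0 ↔ Even j)) := by
    intro j hj
    induction j with
    | zero => simp
    | succ j ih =>
      rw [hstep j (by omega), ih (by omega), Nat.even_add_one]
      tauto
  have hm1 : Even (m - 1) := by obtain ⟨k, rfl⟩ := hm; simp
  have := hparity (m - 1) (by obtain ⟨k, rfl⟩ := hm; omega)
  simp only [hm1, iff_true] at this
  tauto

def cycleGadget (m f : ℕ) : Finset (Finset ℕ) :=
  insert {0, m - 1, f} ((range (m - 1)).image fun j => {j, j + 1, m})

def rimWeight (m : ℕ) (j : ℕ) : ℕ := if j < m then 1 else 0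

variable {m f : ℕ}

theorem isTransversal_cycleGadget_iff {b : ℕ → ℕ} :
    IsTransversal (cycleGadget m f) b ↔
      (b 0 ≠ 0 ∨ b (m - 1) ≠ 0 ∨ b f ≠ 0) ∧ ∀ j < m - 1, b j ≠ 0 ∨ b (j + 1) ≠ 0 ∨ b m ≠ 0 := by
  simp [IsTransversal, cycleGadget]

theorem not_twoTransversalsBelow_cycleGadget (hm : Odd m) (hmf : m ≤ f) :
    ¬ TwoTransversalsBelow (cycleGadget m f) (range (f + 1)) (rimWeight m) := by
  rintro ⟨b, c, hb, hc, hbc⟩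
  rw [isTransversal_cycleGadget_iff] at hb hc
  have hbound (v : ℕ) (hv : v ≤ f) : b v + c v ≤ if v < m then 1 else 0 :=
    hbc v (mem_range.2 (by omega))
  have hbm := hbound m hmf
  have hbf := hbound f le_rfl
  simp only [lt_irrefl, if_false, Nat.not_lt.2 hmf] at hbm hbf
  have hm1 : 1 ≤ m := hm.pos
  refine false_of_alternates_on_odd_cycle (p := fun j => b j ≠ 0) hm (fun j hj => ?_) ?_
  · have h₁ := hbound j (by omega)
    have h₂ := hbound (j + 1) (by omega)
    rw [if_pos (by omega)] at h₁ h₂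
    have := hb.2 j hj
    have := hc.2 j hj
    omega
  · have h₁ := hbound 0 (by omega)
    have h₂ := hbound (m - 1) (by omega)
    rw [if_pos (by omega)] at h₁ h₂
    have := hb.1
    have := hc.1
    omega

theorem twoTransversalsBelow_cycleGadget (hm : Odd m) (hm3 : 3 ≤ m) (hf : f = m ∨ f = m + 1)
    {i : ℕ} (hi : i ≤ f) :
    TwoTransversalsBelow (cycleGadget m f) (range (f + 1)) (rimWeight m + Pi.single i 1) := by
  have hm2 : m % 2 = 1 := Nat.odd_iff.1 hm
  simp only [TwoTransversalsBelow, isTransversal_cycleGadget_iff, mem_range, Pi.add_apply,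
    rimWeight, Pi.single_apply]
  obtain him | rfl | ⟨rfl, rfl⟩ : i < m ∨ i = f ∨ (m = i ∧ f = m + 1) := by omega
  · -- alternate around the rim, restarting at `i`
    refine ⟨fun j => if j < m ∧ (i ≤ j ↔ j % 2 = i % 2) then 1 else 0,
      fun j => if j < m ∧ (j = i ∨ (i ≤ j ↔ j % 2 ≠ i % 2)) then 1 else 0, ⟨?_, ?_⟩, ⟨?_, ?_⟩, ?_⟩
    all_goals (try intro j hj); dsimp only; split_ifs <;> omega
  · refine ⟨fun j => if j = i ∨ (j < m ∧ j % 2 = 1) then 1 else 0,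
      fun j => if j < m ∧ j % 2 = 0 then 1 else 0, ⟨?_, ?_⟩, ⟨?_, ?_⟩, ?_⟩
    all_goals (try intro j hj); dsimp only; split_ifs <;> omega
  · refine ⟨fun j => if j = m ∨ j = m - 1 then 1 else 0,
      fun j => if j < m - 1 then 1 else 0, ⟨?_, ?_⟩, ⟨?_, ?_⟩, ?_⟩
    all_goals (try intro j hj); dsimp only; split_ifs <;> omega

theorem card_of_mem_cycleGadget (hm3 : 3 ≤ m) (hmf : m ≤ f) {e : Finset ℕ}
    (he : e ∈ cycleGadget m f) : e.card = 3 := by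
  simp only [cycleGadget, mem_insert, mem_image, mem_range] at he
  rcases he with rfl | ⟨j, hj, rfl⟩ <;>
    exact card_eq_three.2 ⟨_, _, _, by omega, by omega, by omega, rfl⟩

theorem le_of_mem_cycleGadget (hmf : m ≤ f) {e : Finset ℕ} (he : e ∈ cycleGadget m f) {a : ℕ}
    (ha : a ∈ e) : a ≤ f := by
  simp only [cycleGadget, mem_insert, mem_image, mem_range] at he
  rcases he with rfl | ⟨j, hj, rfl⟩ <;> simp only [mem_insert, mem_singleton] at ha <;> omega

theorem reflTransGen_cycleGadget (hm3 : 3 ≤ m) (hf : f = m ∨ f = m + 1) {a : ℕ} (ha : a ≤ f) :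
    Relation.ReflTransGen (HAdj (cycleGadget m f)) a 0 := by
  have hpath {j : ℕ} (hj : j < m - 1) : HAdj (cycleGadget m f) j m :=
    ⟨{j, j + 1, m}, mem_insert_of_mem (mem_image_of_mem _ (mem_range.2 hj)), by simp, by simp⟩
  have hclose {j : ℕ} (hj : j = m - 1 ∨ j = f) : HAdj (cycleGadget m f) j 0 :=
    ⟨{0, m - 1, f}, mem_insert_self _ _, by rcases hj with rfl | rfl <;> simp, by simp⟩
  have hm0 : Relation.ReflTransGen (HAdj (cycleGadget m f)) m 0 :=
    .single (hpath (j := 0) (by omega)).symm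
  obtain ha | rfl | rfl | rfl : a < m - 1 ∨ a = m - 1 ∨ a = m ∨ a = f := by omega
  · exact .head (hpath ha) hm0
  · exact .single (hclose (.inl rfl))
  · exact hm0
  · exact .single (hclose (.inr rfl))

end OddCycle

section Construction

def rimLength (q : ℕ) : ℕ := q - 1 - q % 2

-- For `q = 3` the rim would be a single vertex, so the odd cycle degenerates to one triangle.
def core (q : ℕ) : Finset (Finset ℕ) :=
  if q = 3 then {{0, 1, 2}} else cycleGadget (rimLength q) (q - 1)

def fan (q n : ℕ) : Finset (Finset ℕ) :=
  (Ico q n).image fun v => {0, v - 1, v}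

def witnessHypergraph (q n : ℕ) : Finset (Finset ℕ) :=
  core q ∪ fan q n

variable {q n : ℕ}

theorem rimLength_spec (hq : 4 ≤ q) :
    Odd (rimLength q) ∧ 3 ≤ rimLength q ∧ (q - 1 = rimLength q ∨ q - 1 = rimLength q + 1) := by
  rw [Nat.odd_iff, rimLength]
  omega

theorem lt_of_mem_core (hq : 3 ≤ q) {e : Finset ℕ} (he : e ∈ core q) {a : ℕ} (ha : a ∈ e) :
    a < q := by
  unfold core at he
  split_ifs at he with h3
  · simp only [mem_singleton] at he
    subst he
    simp only [mem_insert, mem_singleton] at ha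
    omega
  · obtain ⟨-, -, hf⟩ := rimLength_spec (by omega : 4 ≤ q)
    have := le_of_mem_cycleGadget (by omega) he ha
    omega

theorem card_of_mem_core (hq : 3 ≤ q) {e : Finset ℕ} (he : e ∈ core q) : e.card = 3 := by
  unfold core at he
  split_ifs at he with h3
  · rw [mem_singleton.1 he]
    rfl
  · obtain ⟨-, hm3, hf⟩ := rimLength_spec (by omega : 4 ≤ q)
    exact card_of_mem_cycleGadget hm3 (by omega) he

theorem not_twoTransversalsBelow_core (hq : 3 ≤ q) :
    ¬ TwoTransversalsBelow (core q) (range q) (rimWeight (rimLength q)) := by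
  unfold core
  split_ifs with h3
  · subst h3
    rintro ⟨b, c, hb, hc, hbc⟩
    simp only [IsTransversal, mem_singleton, forall_eq, mem_insert, exists_eq_or_imp,
      exists_eq_left] at hb hc
    have h₀ : b 0 + c 0 ≤ 1 := hbc 0 (by simp)
    have h₁ : b 1 + c 1 ≤ 0 := hbc 1 (by simp)
    have h₂ : b 2 + c 2 ≤ 0 := hbc 2 (by simp)
    omega
  · obtain ⟨hm, -, hf⟩ := rimLength_spec (by omega : 4 ≤ q)
    have hS : range q = range (q - 1 + 1) := by congr 1; omega
    rw [hS]
    exact not_twoTransversalsBelow_cycleGadget hm (by omega)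

theorem twoTransversalsBelow_core (hq : 3 ≤ q) {i : ℕ} (hi : i < q) :
    TwoTransversalsBelow (core q) (range q) (rimWeight (rimLength q) + Pi.single i 1) := by
  unfold core
  split_ifs with h3
  · subst h3
    refine ⟨fun j => if j = i then 1 else 0, fun j => if j = 0 then 1 else 0, ?_, ?_, ?_⟩
    · simp only [IsTransversal, mem_singleton, ne_eq, ite_eq_right_iff, one_ne_zero, imp_false,
        Decidable.not_not, exists_eq_right, forall_eq, mem_insert]
      omega
    · simp [IsTransversal]
    · intro v hv
      simp only [mem_range, Pi.add_apply, rimWeight, rimLength, Pi.single_apply] at hv ⊢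
      split_ifs <;> omega
  · obtain ⟨hm, hm3, hf⟩ := rimLength_spec (by omega : 4 ≤ q)
    have hS : range q = range (q - 1 + 1) := by congr 1; omega
    rw [hS]
    exact twoTransversalsBelow_cycleGadget hm hm3 (by omega) (by omega)

theorem reflTransGen_core (hq : 3 ≤ q) {a : ℕ} (ha : a < q) :
    Relation.ReflTransGen (HAdj (core q)) a 0 := by
  unfold core
  split_ifs with h3
  · subst h3
    refine .single ⟨{0, 1, 2}, mem_singleton_self _, ?_, by simp⟩
    simp only [mem_insert, mem_singleton]
    omega
  · obtain ⟨-, hm3, hf⟩ := rimLength_spec (by omega : 4 ≤ q)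
    exact reflTransGen_cycleGadget hm3 (by omega) (by omega)

theorem lt_of_mem_witnessHypergraph (hq : 3 ≤ q) (hn : q ≤ n) {e : Finset ℕ}
    (he : e ∈ witnessHypergraph q n) {a : ℕ} (ha : a ∈ e) : a < n := by
  rcases mem_union.1 he with he | he
  · exact (lt_of_mem_core hq he ha).trans_le hn
  · obtain ⟨v, hv, rfl⟩ := mem_image.1 he
    simp only [mem_Ico] at hv
    simp only [mem_insert, mem_singleton] at ha
    omega

theorem card_of_mem_witnessHypergraph (hq : 3 ≤ q) {e : Finset ℕ}
    (he : e ∈ witnessHypergraph q n) : e.card = 3 := by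
  rcases mem_union.1 he with he | he
  · exact card_of_mem_core hq he
  · obtain ⟨v, hv, rfl⟩ := mem_image.1 he
    simp only [mem_Ico] at hv
    exact card_eq_three.2 ⟨_, _, _, by omega, by omega, by omega, rfl⟩

theorem exists_mem_fan_not_mem_range {e : Finset ℕ} (he : e ∈ fan q n) :
    ∃ a ∈ e, a < n ∧ a ∉ range q := by
  obtain ⟨v, hv, rfl⟩ := mem_image.1 he
  simp only [mem_Ico] at hv
  exact ⟨v, by simp, hv.2, by simpa using hv.1⟩

theorem reflTransGen_witnessHypergraph (hq : 3 ≤ q) {a : ℕ} (ha : a < n) :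
    Relation.ReflTransGen (HAdj (witnessHypergraph q n)) a 0 := by
  by_cases haq : a < q
  · exact Relation.ReflTransGen.mono (fun _ _ h => HAdj.mono h subset_union_left) _ _
      (reflTransGen_core hq haq)
  · refine .single ⟨{0, a - 1, a}, mem_union_right _ (mem_image_of_mem _ ?_), by simp, by simp⟩
    simp only [mem_Ico]
    omega

end Construction

section Restriction

variable {n : ℕ}

def toFin (n : ℕ) (e : Finset ℕ) : Finset (Fin n) :=
  e.preimage Fin.val Fin.val_injective.injOn

@[simp]
theorem mem_toFin {e : Finset ℕ} {v : Fin n} : v ∈ toFin n e ↔ ↑v ∈ e :=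
  mem_preimage

theorem card_toFin {e : Finset ℕ} (he : ∀ a ∈ e, a < n) : (toFin n e).card = e.card := by
  rw [show toFin n e = e.attachFin he by ext; simp, card_attachFin]

theorem TwoTransversalsBelow.image_toFin {F : Finset (Finset ℕ)} {S : Finset ℕ} {w : ℕ → ℕ}
    (h : TwoTransversalsBelow F S w) (hF : ∀ e ∈ F, ∀ a ∈ e, a < n) :
    TwoTransversalsBelow (F.image (toFin n)) (toFin n S) (w ∘ Fin.val) := by
  obtain ⟨b, c, hb, hc, hbc⟩ := h
  have hlift {b : ℕ → ℕ} (hb : IsTransversal F b) :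
      IsTransversal (F.image (toFin n)) (b ∘ Fin.val) := by
    rintro _ he'
    obtain ⟨e, he, rfl⟩ := mem_image.1 he'
    obtain ⟨a, ha, hba⟩ := hb e he
    exact ⟨⟨a, hF e he a ha⟩, by simpa using ha, hba⟩
  exact ⟨_, _, hlift hb, hlift hc, fun v hv => hbc v (mem_toFin.1 hv)⟩

theorem TwoTransversalsBelow.of_image_toFin {F : Finset (Finset ℕ)} {S : Finset ℕ} {w : ℕ → ℕ}
    (h : TwoTransversalsBelow (F.image (toFin n)) (toFin n S) (w ∘ Fin.val)) :
    TwoTransversalsBelow F S w := by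
  obtain ⟨b, c, hb, hc, hbc⟩ := h
  let extend (b : Fin n → ℕ) (a : ℕ) : ℕ := if ha : a < n then b ⟨a, ha⟩ else 0
  have hextend {b : Fin n → ℕ} (hb : IsTransversal (F.image (toFin n)) b) :
      IsTransversal F (extend b) := by
    intro e he
    obtain ⟨v, hv, hbv⟩ := hb _ (mem_image_of_mem _ he)
    exact ⟨v, mem_toFin.1 hv, by simpa [extend] using hbv⟩
  refine ⟨_, _, hextend hb, hextend hc, fun a ha => ?_⟩
  by_cases han : a < n
  · simpa [extend, han] using hbc ⟨a, han⟩ (mem_toFin.2 ha)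
  · simp [extend, han]

theorem hConnected_image_toFin {E : Finset (Finset ℕ)} (hE : ∀ e ∈ E, ∀ a ∈ e, a < n)
    (hn : 0 < n) (h : ∀ a < n, Relation.ReflTransGen (HAdj E) a 0) :
    HConnected (E.image (toFin n)) := by
  refine hConnected_of_reflTransGen ⟨0, hn⟩ fun x => ?_
  suffices ∀ a b, Relation.ReflTransGen (HAdj E) a b → ∀ (ha : a < n) (hb : b < n),
      Relation.ReflTransGen (HAdj (E.image (toFin n))) ⟨a, ha⟩ ⟨b, hb⟩ from
    this _ _ (h x x.isLt) _ _
  intro a b hab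
  induction hab using Relation.ReflTransGen.head_induction_on with
  | refl => exact fun _ _ => .refl
  | head hac _ ih =>
    obtain ⟨e, he, ha, hc⟩ := hac
    exact fun han hbn => .head ⟨toFin n e, mem_image_of_mem _ he, by simpa, by simpa⟩
      (ih (hE e he _ hc) hbn)

theorem isAssociatedPrime_span_X_dualIdeal_sq_image_toFin {K : Type*} [Field K]
    {F G : Finset (Finset ℕ)} {S : Finset ℕ} {w : ℕ → ℕ} (hF : ∀ e ∈ F, ∀ a ∈ e, a < n)
    (hG : ∀ e ∈ G, ∃ a ∈ e, a < n ∧ a ∉ S) (hw : ¬ TwoTransversalsBelow F S w)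
    (hcrit : ∀ i ∈ S, TwoTransversalsBelow F S (w + Pi.single i 1)) :
    IsAssociatedPrime
      (Ideal.span (X '' (toFin n S : Set (Fin n))) : Ideal (MvPolynomial (Fin n) K))
      (MvPolynomial (Fin n) K ⧸ dualIdeal K ((F ∪ G).image (toFin n)) ^ 2) := by
  rw [image_union]
  refine isAssociatedPrime_span_X_dualIdeal_sq (w := w ∘ Fin.val) ?_
    (fun h => hw (.of_image_toFin h)) fun i hi =>
      ((hcrit i (mem_toFin.1 hi)).image_toFin hF).mono subset_rfl fun v _ => ?_
  · rintro _ he'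
    obtain ⟨e, he, rfl⟩ := mem_image.1 he'
    obtain ⟨a, ha, han, haS⟩ := hG e he
    exact ⟨⟨a, han⟩, mem_toFin.2 ha, fun h => haS (mem_toFin.1 h)⟩
  · simp [Pi.single_apply, Fin.ext_iff]

end Restriction

end AlexanderDual

open AlexanderDual in
theorem stmt16 {K : Type*} [Field K] {n q : ℕ} (hq : 3 ≤ q) (hn : q ≤ n) :
    ∃ E : Finset (Finset (Fin n)), (∀ e ∈ E, e.card = 3) ∧ HConnected E ∧
      ∃ S : Finset (Fin n), S.card = q ∧
        IsAssociatedPrime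
          (Ideal.span (X '' (S : Set (Fin n))) : Ideal (MvPolynomial (Fin n) K))
          (MvPolynomial (Fin n) K ⧸ ((dualIdeal K E) ^ 2)) := by
  have hE : ∀ e ∈ witnessHypergraph q n, ∀ a ∈ e, a < n :=
    fun e he a ha => lt_of_mem_witnessHypergraph hq hn he ha
  refine ⟨(witnessHypergraph q n).image (toFin n), ?_,
    hConnected_image_toFin hE (by omega) fun a ha => reflTransGen_witnessHypergraph hq ha,
    toFin n (range q), ?_, ?_⟩
  · intro _ he'
    obtain ⟨e, he, rfl⟩ := mem_image.1 he'
    rw [card_toFin (hE e he), card_of_mem_witnessHypergraph hq he]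
  · rw [card_toFin fun a ha => (mem_range.1 ha).trans_le hn, card_range]
  · exact isAssociatedPrime_span_X_dualIdeal_sq_image_toFin
      (fun e he => hE e (mem_union_left _ he)) (fun e he => exists_mem_fan_not_mem_range he)
      (not_twoTransversalsBelow_core hq) fun i hi => twoTransversalsBelow_core hq (mem_range.1 hi)
end
end

section
/- Let H be a 3-hypergraph of size p with vertex set {x_1,...,x_p}, m ≥ 3, and q = p + m − 3. Define the m-hypergraph H' on {x_1,...,x_q} whose edges are exactly the sets E ∪ {x_{p+1},...,x_q} for E an edge of H. If C is a 2-cover of H that is not a sum of two 1-covers of H and C + e_i is a sum of two 1-covers of H for all i ≤ p, then the extension C' = (C, 0,...,0) ∈ ℕ^q is a 2-cover of H' that is not a sum of two 1-covers of H', and C' + e_i is a sum of two 1-covers of H' for all i ≤ q. -/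
open MvPolynomial Finset

noncomputable section

/-- The `m`-hypergraph `H'` on `Fin (p + m - 3)` obtained from a 3-hypergraph on
`Fin p`: each edge of `H` is enlarged by all the new vertices `x_{p+1},…,x_q`. -/
def extEdges (p m : ℕ) (E : Finset (Finset (Fin p))) (h : p ≤ p + m - 3) :
    Finset (Finset (Fin (p + m - 3))) :=
  E.image fun e =>
    e.image (Fin.castLE h) ∪ (Finset.univ.filter fun i : Fin (p + m - 3) => p ≤ (i : ℕ))

/-- The extension of a tuple on `Fin p` by zeros to `Fin (p + m - 3)`. -/
def extTuple (p m : ℕ) (C : Fin p → ℕ) : Fin (p + m - 3) → ℕ :=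
  fun i => if h : (i : ℕ) < p then C ⟨i, h⟩ else 0

/-! The new vertices lie in every edge of `H'` and carry weight `0` in `C'`. Hence a decomposition
`C' = b + c` into 1-covers of `H'` vanishes on them and restricts to a decomposition of `C` over
`H`, while covers of `H` extend by zeros to covers of `H'`. For a new vertex `i`, `C' + e_i` is the
sum of the 1-covers `C'` and `e_i`. -/

theorem IsCover.mono {V : Type*} {E : Finset (Finset V)} {k l : ℕ} {a : V → ℕ}
    (hkl : k ≤ l) (ha : IsCover E l a) : IsCover E k a :=
  ⟨ha.1, fun e he => hkl.trans (ha.2 e he)⟩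

section Extension

variable {p m : ℕ}

@[simp]
theorem extTuple_castLE (h : p ≤ p + m - 3) (C : Fin p → ℕ) (j : Fin p) :
    extTuple p m C (Fin.castLE h j) = C j := by
  simp [extTuple]

theorem extTuple_of_le (C : Fin p → ℕ) {i : Fin (p + m - 3)} (hi : p ≤ i) :
    extTuple p m C i = 0 :=
  dif_neg hi.not_gt

theorem extTuple_add (b c : Fin p → ℕ) :
    extTuple p m (b + c) = extTuple p m b + extTuple p m c := by
  funext i
  by_cases hi : (i : ℕ) < p <;> simp [extTuple, hi]

theorem extTuple_add_single (h : p ≤ p + m - 3) (C : Fin p → ℕ) (j : Fin p) :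
    extTuple p m (C + Pi.single j 1) = extTuple p m C + Pi.single (Fin.castLE h j) 1 := by
  funext i
  by_cases hi : (i : ℕ) < p
  · obtain ⟨i, rfl⟩ : ∃ i' : Fin p, Fin.castLE h i' = i := ⟨⟨i, hi⟩, rfl⟩
    simp [Pi.single_apply, Fin.castLE_inj]
  · have hij : i ≠ Fin.castLE h j := fun hij => hi (hij ▸ j.isLt)
    simp [extTuple_of_le _ (not_lt.mp hi), hij]

theorem mem_extEdges {h : p ≤ p + m - 3} {E : Finset (Finset (Fin p))}
    {e' : Finset (Fin (p + m - 3))} :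
    e' ∈ extEdges p m E h ↔
      ∃ e ∈ E, e.image (Fin.castLE h) ∪ univ.filter (fun i : Fin (p + m - 3) => p ≤ i) = e' :=
  Finset.mem_image

theorem sum_image_castLE_union (h : p ≤ p + m - 3) (e : Finset (Fin p))
    (a : Fin (p + m - 3) → ℕ) :
    ∑ i ∈ e.image (Fin.castLE h) ∪ univ.filter (fun i : Fin (p + m - 3) => p ≤ i), a i =
      ∑ j ∈ e, a (Fin.castLE h j) + ∑ i ∈ univ.filter (fun i : Fin (p + m - 3) => p ≤ i), a i := by
  have hdisj : Disjoint (e.image (Fin.castLE h)) (univ.filter fun i : Fin (p + m - 3) => p ≤ i) := by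
    simp [Finset.disjoint_left]
  rw [sum_union hdisj, sum_image (Fin.castLE_injective h).injOn]

theorem IsCover.extend {h : p ≤ p + m - 3} {E : Finset (Finset (Fin p))} {k : ℕ}
    {C : Fin p → ℕ} (hC : IsCover E k C) : IsCover (extEdges p m E h) k (extTuple p m C) := by
  refine ⟨fun h0 => hC.1 (funext fun j => by simpa using congrFun h0 (Fin.castLE h j)), fun _ he' => ?_⟩
  obtain ⟨e, he, rfl⟩ := mem_extEdges.mp he'
  rw [sum_image_castLE_union]
  simpa using le_add_right (hC.2 e he)

theorem IsCover.comp_castLE {h : p ≤ p + m - 3} {E : Finset (Finset (Fin p))}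
    {b : Fin (p + m - 3) → ℕ} (hb : IsCover (extEdges p m E h) 1 b)
    (hb0 : ∀ i : Fin (p + m - 3), p ≤ i → b i = 0) : IsCover E 1 (b ∘ Fin.castLE h) := by
  refine ⟨fun h0 => hb.1 (funext fun i => ?_), fun e he => ?_⟩
  · by_cases hi : (i : ℕ) < p
    · simpa using congrFun h0 ⟨i, hi⟩
    · exact hb0 i (not_lt.mp hi)
  · have hsum := hb.2 _ (mem_extEdges.mpr ⟨e, he, rfl⟩)
    rwa [sum_image_castLE_union, sum_eq_zero fun i hi => hb0 i (mem_filter.mp hi).2,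
      add_zero] at hsum

theorem SumTwoOneCovers.extend {h : p ≤ p + m - 3} {E : Finset (Finset (Fin p))}
    {C : Fin p → ℕ} (hC : SumTwoOneCovers E C) :
    SumTwoOneCovers (extEdges p m E h) (extTuple p m C) := by
  obtain ⟨b, c, hb, hc, rfl⟩ := hC
  exact ⟨_, _, hb.extend, hc.extend, extTuple_add b c⟩

theorem SumTwoOneCovers.of_extend {h : p ≤ p + m - 3} {E : Finset (Finset (Fin p))}
    {C : Fin p → ℕ} (hC : SumTwoOneCovers (extEdges p m E h) (extTuple p m C)) :
    SumTwoOneCovers E C := by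
  obtain ⟨b, c, hb, hc, hbc⟩ := hC
  have hvanish : ∀ i : Fin (p + m - 3), p ≤ i → b i = 0 ∧ c i = 0 := fun i hi => by
    have := congrFun hbc i
    simp only [extTuple_of_le C hi, Pi.add_apply] at this
    omega
  refine ⟨_, _, hb.comp_castLE fun i hi => (hvanish i hi).1,
    hc.comp_castLE fun i hi => (hvanish i hi).2, funext fun j => ?_⟩
  simpa using congrFun hbc (Fin.castLE h j)

theorem isCover_extEdges_single (h : p ≤ p + m - 3) (E : Finset (Finset (Fin p)))
    {i : Fin (p + m - 3)} (hi : p ≤ i) : IsCover (extEdges p m E h) 1 (Pi.single i 1) := by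
  refine ⟨by simp, fun _ he' => ?_⟩
  obtain ⟨e, -, rfl⟩ := mem_extEdges.mp he'
  rw [sum_pi_single', if_pos (mem_union_right _ (by simpa using hi))]

end Extension

theorem stmt18 {p m : ℕ} (hm : 3 ≤ m) (E : Finset (Finset (Fin p)))
    (C : Fin p → ℕ)
    (hC2 : IsCover E 2 C) (hCns : ¬ SumTwoOneCovers E C)
    (hCi : ∀ i : Fin p, SumTwoOneCovers E (C + Pi.single i 1)) :
    IsCover (extEdges p m E (by omega)) 2 (extTuple p m C) ∧
      ¬ SumTwoOneCovers (extEdges p m E (by omega)) (extTuple p m C) ∧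
      ∀ i : Fin (p + m - 3),
        SumTwoOneCovers (extEdges p m E (by omega)) (extTuple p m C + Pi.single i 1) := by
  refine ⟨hC2.extend, fun hC => hCns hC.of_extend, fun i => ?_⟩
  by_cases hi : (i : ℕ) < p
  · have hext := (hCi ⟨i, hi⟩).extend (m := m) (h := by omega)
    rwa [extTuple_add_single (by omega)] at hext
  · exact ⟨_, _, (hC2.mono one_le_two).extend, isCover_extEdges_single _ E (not_lt.mp hi), rfl⟩
end
end

section
/- For any integers n ≥ q ≥ m ≥ 3, there exists a connected m-hypergraph H of size n such that (I(H)^∨)^2 has an associated prime of height q. -/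
open MvPolynomial Finset

noncomputable section

/-!
`I(H)^∨` is spanned by the monomials `x^b` whose support meets every edge, so `x^d ∈ (I(H)^∨)^2`
iff `d ≥ b + c` for two such `b, c`. Hence `P_S` is associated to `(I(H)^∨)^2` as soon as, for one
exponent `a`, every `x_i x^a` with `i ∈ S` lies in the square while no `x^d x^a` with `d` supported
off `S` does: then `P_S` is the annihilator of `x^a` modulo the square.

Take an odd cycle on `0, …, c-1` whose edges `{j, j+1}` are padded to size `m` by filler vertices
`c, …, q-1`, attach the remaining vertices by path edges, put `S = {0, …, q-1}`, and let `a` be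
`1` on the cycle, `0` on the fillers and `2` off `S`. For `i ∈ S` the two factors come from two
alternating vertex covers of the cycle overlapping only in `i` (or, for a filler `i`, from
trading a cycle vertex for `i`). Conversely the two factors of `x^d x^a` would restrict to two
disjoint vertex covers of an odd cycle, which do not exist.
-/

def HitsEdges {V : Type*} (E : Finset (Finset V)) (d : V → ℕ) : Prop :=
  ∀ e ∈ E, ∃ i ∈ e, d i ≠ 0

section

variable {V K : Type*} [Field K]

theorem dualIdeal_eq_span_monomial (E : Finset (Finset V)) :
    dualIdeal K E = Ideal.span ((monomial · 1) '' {d | HitsEdges E d}) := by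
  ext x
  simp only [dualIdeal, Submodule.mem_iInf, mem_ideal_span_X_image, mem_ideal_span_monomial_image,
    Set.mem_ofPred_eq, HitsEdges]
  constructor
  · exact fun hx d hd => ⟨d, fun e he => hx e he d hd, le_rfl⟩
  · rintro hx e he d hd
    obtain ⟨b, hb, hbd⟩ := hx d hd
    obtain ⟨i, hi, hbi⟩ := hb e he
    exact ⟨i, hi, fun hdi => hbi (Nat.eq_zero_of_le_zero (hdi ▸ hbd i))⟩

theorem dualIdeal_sq_eq_span_monomial (E : Finset (Finset V)) :
    dualIdeal K E ^ 2 = Ideal.span ((monomial · 1) ''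
      {d | ∃ b c : V →₀ ℕ, HitsEdges E b ∧ HitsEdges E c ∧ d = b + c}) := by
  rw [sq, dualIdeal_eq_span_monomial, Ideal.span_mul_span', ← Set.image2_mul,
    Set.image2_image_left, Set.image2_image_right]
  congr 1
  ext y
  simp only [monomial_mul, one_mul, Set.mem_image2, Set.mem_image, Set.mem_ofPred_eq]
  constructor
  · rintro ⟨b, hb, c, hc, rfl⟩
    exact ⟨b + c, ⟨b, c, hb, hc, rfl⟩, rfl⟩
  · rintro ⟨_, ⟨b, c, hb, hc, rfl⟩, rfl⟩
    exact ⟨b, hb, c, hc, rfl⟩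

theorem mem_dualIdeal_sq_iff {E : Finset (Finset V)} {x : MvPolynomial V K} :
    x ∈ dualIdeal K E ^ 2 ↔ ∀ d ∈ x.support,
      ∃ b c : V →₀ ℕ, HitsEdges E b ∧ HitsEdges E c ∧ b + c ≤ d := by
  rw [dualIdeal_sq_eq_span_monomial, mem_ideal_span_monomial_image]
  constructor
  · rintro hx d hd
    obtain ⟨_, ⟨b, c, hb, hc, rfl⟩, hle⟩ := hx d hd
    exact ⟨b, c, hb, hc, hle⟩
  · rintro hx d hd
    obtain ⟨b, c, hb, hc, hle⟩ := hx d hd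
    exact ⟨b + c, ⟨b, c, hb, hc, rfl⟩, hle⟩

namespace MvPolynomial

open Classical in
theorem ker_aeval_ite_eq_span_X_image (s : Set V) :
    RingHom.ker (aeval (fun i => if i ∈ s then 0 else X i) :
      MvPolynomial V K →ₐ[K] MvPolynomial V K) = Ideal.span (X '' s) := by
  set φ : MvPolynomial V K →ₐ[K] MvPolynomial V K := aeval fun i => if i ∈ s then 0 else X i
  refine le_antisymm (fun x hx => ?_) ?_
  · have hφ : (Ideal.Quotient.mkₐ K (Ideal.span (X '' s))).comp φ = Ideal.Quotient.mkₐ K _ := by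
      refine algHom_ext fun i => ?_
      by_cases hi : i ∈ s
      · have hXi := Ideal.subset_span (Set.mem_image_of_mem (X (R := K)) hi)
        simpa [φ, hi] using (Ideal.Quotient.eq_zero_iff_mem.mpr hXi).symm
      · simp [φ, hi]
    rw [← Ideal.Quotient.eq_zero_iff_mem, ← Ideal.Quotient.mkₐ_eq_mk K, ← hφ]
    simp [(RingHom.mem_ker).mp hx]
  · rw [Ideal.span_le]
    rintro _ ⟨i, hi, rfl⟩
    simp [φ, hi]

theorem isPrime_span_X_image (s : Set V) :
    (Ideal.span (X '' s) : Ideal (MvPolynomial V K)).IsPrime :=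
  ker_aeval_ite_eq_span_X_image (K := K) s ▸ RingHom.ker_isPrime _

end MvPolynomial

theorem span_X_image_eq_colon_monomial {E : Finset (Finset V)} {s : Set V} (a : V →₀ ℕ)
    (hmem : ∀ i ∈ s, ∃ b c : V →₀ ℕ, HitsEdges E b ∧ HitsEdges E c ∧
      b + c ≤ a + Finsupp.single i 1)
    (hnot : ∀ b c d : V →₀ ℕ, HitsEdges E b → HitsEdges E c → (∀ i ∈ s, d i = 0) →
      ¬ b + c ≤ a + d) :
    Ideal.span (X '' s) = (⊥ : Submodule (MvPolynomial V K)
      (MvPolynomial V K ⧸ dualIdeal K E ^ 2)).colon {Submodule.Quotient.mk (monomial a 1)} := by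
  classical
  have mem_colon : ∀ r, r ∈ (⊥ : Submodule (MvPolynomial V K)
      (MvPolynomial V K ⧸ dualIdeal K E ^ 2)).colon {Submodule.Quotient.mk (monomial a 1)} ↔
      r * monomial a 1 ∈ dualIdeal K E ^ 2 := fun r => by
    rw [Submodule.mem_colon_singleton, ← Submodule.Quotient.mk_smul, Submodule.mem_bot,
      Submodule.Quotient.mk_eq_zero, smul_eq_mul]
  refine le_antisymm (Ideal.span_le.mpr ?_) fun r hr => ?_
  · rintro _ ⟨i, hi, rfl⟩
    obtain ⟨b, c, hb, hc, hle⟩ := hmem i hi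
    rw [SetLike.mem_coe, mem_colon, X, monomial_mul, one_mul, mem_dualIdeal_sq_iff]
    intro d hd
    rw [support_monomial, if_neg one_ne_zero, Finset.mem_singleton] at hd
    exact ⟨b, c, hb, hc, hd ▸ add_comm a _ ▸ hle⟩
  · rw [mem_colon, mem_dualIdeal_sq_iff] at hr
    rw [mem_ideal_span_X_image]
    by_contra! h
    obtain ⟨d, hd, hds⟩ := h
    have had : d + a ∈ (r * monomial a 1).support := by
      rwa [mem_support_iff, coeff_mul_monomial, mul_one, ← mem_support_iff]
    obtain ⟨b, c, hb, hc, hle⟩ := hr _ had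
    exact hnot b c d hb hc hds (add_comm d a ▸ hle)

theorem isAssociatedPrime_span_X_image_of_hitsEdges {E : Finset (Finset V)} {s : Set V}
    (a : V →₀ ℕ)
    (hmem : ∀ i ∈ s, ∃ b c : V →₀ ℕ, HitsEdges E b ∧ HitsEdges E c ∧
      b + c ≤ a + Finsupp.single i 1)
    (hnot : ∀ b c d : V →₀ ℕ, HitsEdges E b → HitsEdges E c → (∀ i ∈ s, d i = 0) →
      ¬ b + c ≤ a + d) :
    IsAssociatedPrime (Ideal.span (X '' s) : Ideal (MvPolynomial V K))
      (MvPolynomial V K ⧸ dualIdeal K E ^ 2) := by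
  refine Submodule.isAssociatedPrime_def.mpr
    ⟨isPrime_span_X_image s, Submodule.Quotient.mk (monomial a 1), ?_⟩
  rw [← span_X_image_eq_colon_monomial a hmem hnot, (isPrime_span_X_image s).radical]

end

theorem hConnected_of_reflTransGen {V : Type*} {E : Finset (Finset V)}
    (h : ∀ x y : V, Relation.ReflTransGen (fun a b => ∃ e ∈ E, a ∈ e ∧ b ∈ e) x y) :
    HConnected E := by
  intro x y
  obtain ⟨l, hchain, hlast⟩ := List.exists_isChain_cons_of_relationReflTransGen (h x y)
  exact ⟨x :: l, rfl, by rw [List.getLast?_eq_getLast_of_ne_nil (List.cons_ne_nil x l), hlast],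
    hchain⟩

theorem hConnected_of_forall_exists_lt {V : Type*} [LT V] [WellFoundedLT V]
    {E : Finset (Finset V)} (v₀ : V) (h : ∀ v ≠ v₀, ∃ w < v, ∃ e ∈ E, v ∈ e ∧ w ∈ e) :
    HConnected E := by
  set R : V → V → Prop := fun a b => ∃ e ∈ E, a ∈ e ∧ b ∈ e
  have linked : ∀ v, Relation.ReflTransGen R v v₀ ∧ Relation.ReflTransGen R v₀ v := by
    intro v
    induction v using WellFoundedLT.induction with
    | _ v ih =>
      by_cases hv : v = v₀
      · exact hv ▸ ⟨.refl, .refl⟩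
      · obtain ⟨w, hwv, e, he, hve, hwe⟩ := h v hv
        exact ⟨.head ⟨e, he, hve, hwe⟩ (ih w hwv).1, .tail (ih w hwv).2 ⟨e, he, hwe, hve⟩⟩
  exact hConnected_of_reflTransGen fun x y => (linked x).1.trans (linked y).2

namespace OddCycle

def succ (c j : ℕ) : ℕ := if j + 1 = c then 0 else j + 1

/-- For odd `c` and `r, x < c`: `x - r` is even modulo `c`, i.e. `x` lies in the alternating set
`r, r + 2, …, r + c - 1` of the cycle `ℤ/c`. -/
def EvenFrom (r x : ℕ) : Prop := r ≤ x ↔ x % 2 = r % 2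

variable {c r x : ℕ}

theorem succ_lt (hx : x < c) : succ c x < c := by
  unfold succ; split_ifs <;> omega

theorem evenFrom_or_evenFrom_succ (hc : c % 2 = 1) (hr : r ≤ c) :
    EvenFrom r x ∨ EvenFrom r (succ c x) := by
  unfold EvenFrom succ; split_ifs <;> omega

theorem evenFrom_ne_or_evenFrom_succ_ne (hc : c % 2 = 1) (hr : r < c) (hxr : x ≠ r) :
    (EvenFrom r x ∧ x ≠ r) ∨ (EvenFrom r (succ c x) ∧ succ c x ≠ r) := by
  unfold EvenFrom succ; split_ifs <;> omega

theorem exists_common_of_covers (hc : c % 2 = 1) {P Q : ℕ → Prop}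
    (hP : ∀ x < c, P x ∨ P (succ c x)) (hQ : ∀ x < c, Q x ∨ Q (succ c x)) :
    ∃ x < c, P x ∧ Q x := by
  by_contra! hPQ
  -- disjoint covers force membership in `P` to alternate along the cycle, impossible for odd `c`
  have flip : ∀ x < c, P (succ c x) ↔ ¬ P x := fun x hx =>
    ⟨fun h1 h0 => (hQ x hx).elim (hPQ x hx h0) (hPQ _ (succ_lt hx) h1),
      (hP x hx).resolve_left⟩
  have parity : ∀ x < c, (P x ↔ (P 0 ↔ x % 2 = 0)) := by
    intro x hx
    induction x with
    | zero => simp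
    | succ x ih =>
      have hflip := flip x (by omega)
      rw [succ, if_neg (by omega)] at hflip
      have hpar : (x + 1) % 2 = 0 ↔ ¬ x % 2 = 0 := by omega
      rw [hflip, ih (by omega), hpar]
      tauto
  have hwrap := flip (c - 1) (by omega)
  rw [succ, if_pos (by omega), parity (c - 1) (by omega)] at hwrap
  have hpar : (c - 1) % 2 = 0 := by omega
  tauto

end OddCycle

namespace CycleHypergraph

open OddCycle

/- The cycle has length `c = cycLen q m`, the largest odd number `≤ q - m + 2`; each cycle edge
`{j, succ c j}` gets `fillersPerEdge q m` fillers from `c, …, q-1`: edge `0` the first ones, the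
other edges the last ones, which uses all `q - c ≤ fillersPerEdge q m + 1` fillers. Every
`t ∈ [q, n)` closes the path edge `{t + 1 - m, …, t}`. -/
def cycLen (q m : ℕ) : ℕ := q - m + 1 + (q - m) % 2

def fillersPerEdge (q m : ℕ) : ℕ := if q = m then m - 1 else m - 2

def fillerStart (q m j : ℕ) : ℕ := if j = 0 then cycLen q m else q - fillersPerEdge q m

def cycleEdge (q m j : ℕ) : Finset ℕ :=
  insert j (insert (succ (cycLen q m) j)
    (Ico (fillerStart q m j) (fillerStart q m j + fillersPerEdge q m)))

def pathEdge (m t : ℕ) : Finset ℕ := Icc (t + 1 - m) t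

def natEdges (n q m : ℕ) : Finset (Finset ℕ) :=
  (range (cycLen q m)).image (cycleEdge q m) ∪ (Ico q n).image (pathEdge m)

def toFin (n : ℕ) (s : Finset ℕ) : Finset (Fin n) := s.preimage Fin.val Fin.val_injective.injOn

def edges (n q m : ℕ) : Finset (Finset (Fin n)) := (natEdges n q m).image (toFin n)

def weight (q m x : ℕ) : ℕ := if x < cycLen q m then 1 else if x < q then 0 else 2

@[simp]
theorem mem_toFin {n : ℕ} {s : Finset ℕ} {i : Fin n} : i ∈ toFin n s ↔ (i : ℕ) ∈ s :=
  Finset.mem_preimage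

theorem card_toFin {n : ℕ} {s : Finset ℕ} (hs : ∀ x ∈ s, x < n) : (toFin n s).card = s.card := by
  rw [toFin, Finset.card_preimage]
  congr 1
  exact Finset.filter_true_of_mem fun x hx => ⟨⟨x, hs x hx⟩, rfl⟩

theorem cycLen_odd (q m : ℕ) : cycLen q m % 2 = 1 := by
  unfold cycLen; omega

variable {n q m : ℕ}

theorem cycLen_add_fillersPerEdge_le (hm : 3 ≤ m) (hq : m ≤ q) :
    cycLen q m + fillersPerEdge q m ≤ q := by
  unfold cycLen fillersPerEdge; split_ifs <;> omega

theorem le_cycLen_add_fillersPerEdge (hm : 3 ≤ m) :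
    q ≤ cycLen q m + fillersPerEdge q m + 1 := by
  unfold cycLen fillersPerEdge; split_ifs <;> omega

theorem one_lt_cycLen_of_lt (h : cycLen q m + fillersPerEdge q m < q) :
    1 < cycLen q m := by
  unfold cycLen fillersPerEdge at *; split_ifs at h <;> omega

theorem fillersPerEdge_add (hm : 3 ≤ m) (hq : m ≤ q) :
    fillersPerEdge q m + (if cycLen q m = 1 then 1 else 2) = m := by
  unfold cycLen fillersPerEdge; split_ifs <;> omega

theorem lt_of_mem_cycleEdge (hm : 3 ≤ m) (hq : m ≤ q) {j x : ℕ} (hj : j < cycLen q m)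
    (hx : x ∈ cycleEdge q m j) : x < q := by
  have := succ_lt hj
  have := cycLen_add_fillersPerEdge_le hm hq
  simp only [cycleEdge, fillerStart, mem_insert, mem_Ico] at hx
  split_ifs at hx <;> omega

theorem card_cycleEdge (hm : 3 ≤ m) (hq : m ≤ q) {j : ℕ} (hj : j < cycLen q m) :
    (cycleEdge q m j).card = m := by
  have := cycLen_add_fillersPerEdge_le hm hq
  have := fillersPerEdge_add hm hq
  rw [cycleEdge, card_insert_eq_ite, card_insert_eq_ite, Nat.card_Ico]
  simp only [mem_insert, mem_Ico, fillerStart]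
  unfold succ at *
  split_ifs at * <;> omega

theorem exists_cycleEdge_of_filler (hm : 3 ≤ m) (hq : m ≤ q) {u : ℕ} (hcu : cycLen q m ≤ u)
    (huq : u < q) :
    ∃ j < cycLen q m, u ∈ cycleEdge q m j := by
  by_cases hu : u < cycLen q m + fillersPerEdge q m
  · refine ⟨0, by have := cycLen_odd q m; omega, ?_⟩
    simp only [cycleEdge, fillerStart, mem_insert, mem_Ico, ↓reduceIte]
    omega
  · have := le_cycLen_add_fillersPerEdge (q := q) hm
    have := cycLen_add_fillersPerEdge_le hm hq
    have : 1 ≤ fillersPerEdge q m := by unfold fillersPerEdge; split_ifs <;> omega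
    refine ⟨1, one_lt_cycLen_of_lt (by omega), ?_⟩
    simp only [cycleEdge, fillerStart, one_ne_zero, if_false, mem_insert, mem_Ico]
    omega

theorem card_pathEdge {t : ℕ} (ht : m ≤ t) : (pathEdge m t).card = m := by
  rw [pathEdge, Nat.card_Icc]; omega

theorem lt_of_mem_natEdges (hm : 3 ≤ m) (hq : m ≤ q) (hn : q ≤ n) {s : Finset ℕ}
    (hs : s ∈ natEdges n q m) {x : ℕ} (hx : x ∈ s) : x < n := by
  simp only [natEdges, mem_union, mem_image, mem_range, mem_Ico] at hs
  rcases hs with ⟨j, hj, rfl⟩ | ⟨t, ht, rfl⟩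
  · exact (lt_of_mem_cycleEdge hm hq hj hx).trans_le hn
  · rw [pathEdge, mem_Icc] at hx; omega

theorem card_of_mem_edges (hm : 3 ≤ m) (hq : m ≤ q) (hn : q ≤ n) {e : Finset (Fin n)}
    (he : e ∈ edges n q m) : e.card = m := by
  obtain ⟨s, hs, rfl⟩ := mem_image.mp he
  rw [card_toFin fun x hx => lt_of_mem_natEdges hm hq hn hs hx]
  simp only [natEdges, mem_union, mem_image, mem_range, mem_Ico] at hs
  rcases hs with ⟨j, hj, rfl⟩ | ⟨t, ht, rfl⟩
  · exact card_cycleEdge hm hq hj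
  · exact card_pathEdge (by omega)

theorem exists_lt_mem_natEdges (hm : 3 ≤ m) (hq : m ≤ q) {v : ℕ} (hv : 0 < v) (hvn : v < n) :
    ∃ w < v, ∃ s ∈ natEdges n q m, v ∈ s ∧ w ∈ s := by
  simp only [natEdges, mem_union, mem_image, mem_range, mem_Ico]
  by_cases hvc : v < cycLen q m
  · refine ⟨v - 1, by omega, _, Or.inl ⟨v - 1, by omega, rfl⟩, ?_, ?_⟩ <;>
      simp [cycleEdge, succ, show v - 1 + 1 = v by omega, hvc.ne]
  by_cases hvq : v < q
  · obtain ⟨j, hj, hvj⟩ := exists_cycleEdge_of_filler hm hq (not_lt.mp hvc) hvq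
    exact ⟨j, by omega, _, Or.inl ⟨j, hj, rfl⟩, hvj, mem_insert_self _ _⟩
  · refine ⟨v - 1, by omega, _, Or.inr ⟨v, ⟨by omega, hvn⟩, rfl⟩, ?_, ?_⟩ <;>
      simp only [pathEdge, mem_Icc] <;> omega

theorem hConnected_edges (hm : 3 ≤ m) (hq : m ≤ q) (hn : q ≤ n) : HConnected (edges n q m) := by
  refine hConnected_of_forall_exists_lt ⟨0, by omega⟩ fun v hv => ?_
  obtain ⟨w, hwv, s, hs, hvs, hws⟩ :=
    exists_lt_mem_natEdges hm hq (Nat.pos_of_ne_zero (Fin.val_ne_iff.mpr hv)) v.isLt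
  exact ⟨⟨w, hwv.trans v.isLt⟩, hwv, toFin n s, mem_image_of_mem _ hs, mem_toFin.mpr hvs,
    mem_toFin.mpr hws⟩

open Classical in
def outsideOr (q : ℕ) (X : ℕ → Prop) (x : ℕ) : ℕ := if q ≤ x ∨ X x then 1 else 0

def finVec (n : ℕ) (f : ℕ → ℕ) : Fin n →₀ ℕ := Finsupp.equivFunOnFinite.symm fun i => f i

@[simp]
theorem finVec_apply (f : ℕ → ℕ) (i : Fin n) : finVec n f i = f i := rfl

theorem hitsEdges_finVec_outsideOr (hm : 3 ≤ m) (hq : m ≤ q) (hn : q ≤ n) {X : ℕ → Prop}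
    (hX : ∀ j < cycLen q m, ∃ x ∈ cycleEdge q m j, X x) :
    HitsEdges (edges n q m) (finVec n (outsideOr q X)) := by
  intro e he
  obtain ⟨s, hs, rfl⟩ := mem_image.mp he
  have hit : ∃ x ∈ s, q ≤ x ∨ X x := by
    simp only [natEdges, mem_union, mem_image, mem_range, mem_Ico] at hs
    rcases hs with ⟨j, hj, rfl⟩ | ⟨t, ht, rfl⟩
    · obtain ⟨x, hx, hXx⟩ := hX j hj
      exact ⟨x, hx, Or.inr hXx⟩
    · exact ⟨t, by simp only [pathEdge, mem_Icc]; omega, Or.inl ht.1⟩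
  obtain ⟨x, hx, hqX⟩ := hit
  exact ⟨⟨x, lt_of_mem_natEdges hm hq hn hs hx⟩, mem_toFin.mpr hx, by simp [outsideOr, hqX]⟩

/-- For a cycle vertex `u` use the alternating sets from `u` and `u + 1`, which meet only in `u`;
for a filler `u` of the edge `j`, replace `j` by `u` in the alternating set from `j`. -/
theorem exists_covers_le_weight_add (hm : 3 ≤ m) (hq : m ≤ q) {u : ℕ} (hu : u < q) :
    ∃ X Y : ℕ → Prop, (∀ j < cycLen q m, ∃ x ∈ cycleEdge q m j, X x) ∧
      (∀ j < cycLen q m, ∃ x ∈ cycleEdge q m j, Y x) ∧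
      ∀ x, outsideOr q X x + outsideOr q Y x ≤ weight q m x + if x = u then 1 else 0 := by
  have hodd := cycLen_odd q m
  have hcq := cycLen_add_fillersPerEdge_le hm hq
  have covers : ∀ {Z : ℕ → Prop}, (∀ j < cycLen q m, Z j ∨ Z (succ (cycLen q m) j)) →
      ∀ j < cycLen q m, ∃ x ∈ cycleEdge q m j, Z x := fun hZ j hj =>
    (hZ j hj).elim (fun h => ⟨j, by simp [cycleEdge], h⟩) fun h => ⟨_, by simp [cycleEdge], h⟩
  by_cases huc : u < cycLen q m
  · refine ⟨fun x => x < cycLen q m ∧ EvenFrom u x, fun x => x < cycLen q m ∧ EvenFrom (u + 1) x,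
      covers fun j hj => ?_, covers fun j hj => ?_, fun x => ?_⟩
    · exact (evenFrom_or_evenFrom_succ hodd huc.le).imp (⟨hj, ·⟩) (⟨succ_lt hj, ·⟩)
    · exact (evenFrom_or_evenFrom_succ hodd huc).imp (⟨hj, ·⟩) (⟨succ_lt hj, ·⟩)
    · unfold outsideOr weight EvenFrom
      split_ifs <;> omega
  · obtain ⟨j, hj, huj⟩ := exists_cycleEdge_of_filler hm hq (not_lt.mp huc) hu
    refine ⟨fun x => x = u ∨ (x < cycLen q m ∧ EvenFrom j x ∧ x ≠ j),
      fun x => x < cycLen q m ∧ EvenFrom (j + 1) x, fun i hi => ?_, covers fun i hi => ?_,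
      fun x => ?_⟩
    · by_cases hij : i = j
      · exact ⟨u, hij ▸ huj, Or.inl rfl⟩
      · obtain h | h := evenFrom_ne_or_evenFrom_succ_ne hodd hj hij
        · exact ⟨i, by simp [cycleEdge], Or.inr ⟨hi, h⟩⟩
        · exact ⟨_, by simp [cycleEdge], Or.inr ⟨succ_lt hi, h⟩⟩
    · exact (evenFrom_or_evenFrom_succ hodd hj).imp (⟨hi, ·⟩) (⟨succ_lt hi, ·⟩)
    · unfold outsideOr weight EvenFrom
      split_ifs <;> omega

theorem hits_cycle_of_le_weight (hm : 3 ≤ m) (hq : m ≤ q) {f : Fin n →₀ ℕ}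
    (hf : HitsEdges (edges n q m) f) (hle : ∀ i : Fin n, (i : ℕ) < q → f i ≤ weight q m i)
    {j : ℕ} (hj : j < cycLen q m) :
    (∃ i : Fin n, (i : ℕ) = j ∧ f i ≠ 0) ∨
      ∃ i : Fin n, (i : ℕ) = succ (cycLen q m) j ∧ f i ≠ 0 := by
  obtain ⟨i, hi, hfi⟩ := hf (toFin n (cycleEdge q m j))
    (mem_image_of_mem _ (mem_union_left _ (mem_image_of_mem _ (mem_range.mpr hj))))
  rw [mem_toFin] at hi
  have hiq := lt_of_mem_cycleEdge hm hq hj hi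
  have := cycLen_add_fillersPerEdge_le hm hq
  simp only [cycleEdge, fillerStart, mem_insert, mem_Ico] at hi
  rcases hi with hi | hi | hi
  · exact Or.inl ⟨i, hi, hfi⟩
  · exact Or.inr ⟨i, hi, hfi⟩
  · have := hle i hiq
    unfold weight at this
    split_ifs at hi this <;> omega

theorem not_add_le_weight_add (hm : 3 ≤ m) (hq : m ≤ q) {b c d : Fin n →₀ ℕ}
    (hb : HitsEdges (edges n q m) b) (hc : HitsEdges (edges n q m) c)
    (hd : ∀ i : Fin n, (i : ℕ) < q → d i = 0) : ¬ b + c ≤ finVec n (weight q m) + d := by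
  intro hle
  have hbc : ∀ i : Fin n, (i : ℕ) < q → b i + c i ≤ weight q m i := fun i hi => by
    simpa [hd i hi] using Finsupp.le_def.mp hle i
  obtain ⟨x, hx, ⟨i, rfl, hbi⟩, ⟨i', hi', hci'⟩⟩ := exists_common_of_covers (cycLen_odd q m)
    (P := fun x => ∃ i : Fin n, (i : ℕ) = x ∧ b i ≠ 0)
    (Q := fun x => ∃ i : Fin n, (i : ℕ) = x ∧ c i ≠ 0)
    (fun j hj => hits_cycle_of_le_weight hm hq hb (fun i hi => by have := hbc i hi; omega) hj)
    (fun j hj => hits_cycle_of_le_weight hm hq hc (fun i hi => by have := hbc i hi; omega) hj)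
  obtain rfl : i' = i := Fin.ext hi'
  have := hbc i' (by have := cycLen_add_fillersPerEdge_le hm hq; omega)
  simp only [weight, hx, if_true] at this
  omega

end CycleHypergraph

open CycleHypergraph

theorem stmt19 {K : Type*} [Field K] {n q m : ℕ} (hm : 3 ≤ m) (hq : m ≤ q) (hn : q ≤ n) :
    ∃ E : Finset (Finset (Fin n)), (∀ e ∈ E, e.card = m) ∧ HConnected E ∧
      ∃ S : Finset (Fin n), S.card = q ∧
        IsAssociatedPrime
          (Ideal.span (X '' (S : Set (Fin n))) : Ideal (MvPolynomial (Fin n) K))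
          (MvPolynomial (Fin n) K ⧸ ((dualIdeal K E) ^ 2)) := by
  refine ⟨edges n q m, fun e he => card_of_mem_edges hm hq hn he, hConnected_edges hm hq hn,
    toFin n (range q), (card_toFin fun x hx => (mem_range.mp hx).trans_le hn).trans (card_range q),
    ?_⟩
  refine isAssociatedPrime_span_X_image_of_hitsEdges (finVec n (weight q m)) (fun i hi => ?_)
    fun b c d hb hc hd => not_add_le_weight_add hm hq hb hc fun i hi => hd i (by simpa using hi)
  obtain ⟨X, Y, hX, hY, hle⟩ := exists_covers_le_weight_add hm hq (by simpa using hi)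
  refine ⟨_, _, hitsEdges_finVec_outsideOr hm hq hn hX, hitsEdges_finVec_outsideOr hm hq hn hY,
    fun j => ?_⟩
  simpa [Finsupp.single_apply, eq_comm, Fin.ext_iff] using hle j
end
end
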